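/- Let G be a simple C4-free graph, let x, x1, x2 form a triangle, and let y be a neighbor of x with y ∉ {x1, x2}. Then within the punctured 2-ball of x, the vertices y and x1 lie in different connected components. -/

import Mathlib

open Finset

variable {V : Type*}

/-- Unweighted non-normalized graph Laplacian. -/
noncomputable def nnLap (G : SimpleGraph V) [G.LocallyFinite] (f : V → ℝ) (x : V) : ℝ :=
  ∑ y ∈ G.neighborFinset x, (f y - f x)

/-- Unweighted normalized graph Laplacian. -/
noncomputable def nLap (G : SimpleGraph V) [G.LocallyFinite] (f : V → ℝ) (x : V) : ℝ :=
  (∑ y ∈ G.neighborFinset x, (f y - f x)) / (G.degree x : ℝ)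

/-- Bakry–Émery carré du champ operator Γ for a Laplacian `L`. -/
noncomputable def gam (L : (V → ℝ) → V → ℝ) (f g : V → ℝ) (x : V) : ℝ :=
  (L (f * g) x - f x * L g x - g x * L f x) / 2

/-- Iterated carré du champ operator Γ₂ for a Laplacian `L`. -/
noncomputable def gam2 (L : (V → ℝ) → V → ℝ) (f g : V → ℝ) (x : V) : ℝ :=
  (L (gam L f g) x - gam L f (L g) x - gam L (L f) g x) / 2

/-- `G` has no 4-cycle subgraph, equivalently any two distinct vertices have at
most one common neighbor. -/
def C4Free (G : SimpleGraph V) : Prop :=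
  ∀ ⦃u v a b : V⦄, u ≠ v → G.Adj u a → G.Adj a v → G.Adj u b → G.Adj b v → a = b

/-- The punctured 2-ball of `x`: the graph on `S₁(x) ∪ S₂(x)` with the spherical
edges inside `S₁(x)` and the radial edges between `S₁(x)` and `S₂(x)`. -/
def pBall (G : SimpleGraph V) (x : V) : SimpleGraph V where
  Adj u v := G.Adj u v ∧ ((G.dist x u = 1 ∧ G.dist x v = 1) ∨
    (G.dist x u = 1 ∧ G.dist x v = 2) ∨ (G.dist x u = 2 ∧ G.dist x v = 1))
  symm := by
    constructor
    intro u v h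
    refine ⟨h.1.symm, ?_⟩
    tauto
  loopless := ⟨fun u h => G.irrefl h.1⟩

/-! In a C₄-free graph the triangle `x x₁ x₂` forces `x₂` to be the only common neighbour of `x`
and `x₁`, and a vertex at distance 2 from `x` has only one neighbour on the 1-sphere of `x`.
Hence the edge `x₁x₂` together with its neighbours on the 2-sphere is closed under adjacency in
the punctured 2-ball, while `y` lies on the 1-sphere outside it. -/

namespace SimpleGraph

theorem Reachable.mem_of_adj_closed {H : SimpleGraph V} {s : Set V}
    (hs : ∀ ⦃u v⦄, H.Adj u v → u ∈ s → v ∈ s) {u v : V} (h : H.Reachable u v) (hu : u ∈ s) :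
    v ∈ s := by
  obtain ⟨p⟩ := h
  induction p with
  | nil => exact hu
  | cons huv _ ih => exact ih (hs huv hu)

end SimpleGraph

open SimpleGraph

variable {G : SimpleGraph V} {x u v : V}

theorem pBall_adj_iff_of_dist_eq_one (hu : G.dist x u = 1) :
    (pBall G x).Adj u v ↔ G.Adj u v ∧ (G.dist x v = 1 ∨ G.dist x v = 2) := by
  simp [pBall, hu, -dist_eq_one_iff_adj]

theorem pBall_adj_iff_of_dist_eq_two (hu : G.dist x u = 2) :
    (pBall G x).Adj u v ↔ G.Adj u v ∧ G.dist x v = 1 := by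
  simp [pBall, hu, -dist_eq_one_iff_adj]

def triangleWing (G : SimpleGraph V) (x x1 x2 : V) : Set V :=
  {v | v = x1 ∨ v = x2 ∨ (G.dist x v = 2 ∧ (G.Adj x1 v ∨ G.Adj x2 v))}

namespace C4Free

variable {x1 x2 a : V}

theorem eq_of_pBall_adj_of_triangle (hC4 : C4Free G) (h1 : G.Adj x x1) (h2 : G.Adj x x2)
    (h12 : G.Adj x1 x2) (h : (pBall G x).Adj x1 v) : v = x2 ∨ (G.dist x v = 2 ∧ G.Adj x1 v) := by
  obtain ⟨h1v, hxv | hv⟩ := (pBall_adj_iff_of_dist_eq_one (dist_eq_one_iff_adj.mpr h1)).mp h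
  · exact Or.inl (hC4 h1.ne (dist_eq_one_iff_adj.mp hxv) h1v.symm h2 h12.symm)
  · exact Or.inr ⟨hv, h1v⟩

theorem eq_of_pBall_adj_of_dist_eq_two (hC4 : C4Free G) (hxa : G.Adj x a) (hau : G.Adj a u)
    (hu : G.dist x u = 2) (h : (pBall G x).Adj u v) : v = a := by
  obtain ⟨huv, hxv⟩ := (pBall_adj_iff_of_dist_eq_two hu).mp h
  have hxu : x ≠ u := by rintro rfl; simp at hu
  exact hC4 hxu (dist_eq_one_iff_adj.mp hxv) huv.symm hxa hau

theorem triangleWing_adj_closed (hC4 : C4Free G) (h1 : G.Adj x x1) (h2 : G.Adj x x2)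
    (h12 : G.Adj x1 x2) :
    ∀ ⦃u v⦄, (pBall G x).Adj u v → u ∈ triangleWing G x x1 x2 → v ∈ triangleWing G x x1 x2 := by
  rintro u v huv hu
  rcases hu with rfl | rfl | ⟨hu, hxu | hxu⟩
  · rcases hC4.eq_of_pBall_adj_of_triangle h1 h2 h12 huv with rfl | ⟨hv, h1v⟩
    · exact Or.inr (Or.inl rfl)
    · exact Or.inr (Or.inr ⟨hv, Or.inl h1v⟩)
  · rcases hC4.eq_of_pBall_adj_of_triangle h2 h1 h12.symm huv with rfl | ⟨hv, h2v⟩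
    · exact Or.inl rfl
    · exact Or.inr (Or.inr ⟨hv, Or.inr h2v⟩)
  · exact Or.inl (hC4.eq_of_pBall_adj_of_dist_eq_two h1 hxu hu huv)
  · exact Or.inr (Or.inl (hC4.eq_of_pBall_adj_of_dist_eq_two h2 hxu hu huv))

end C4Free

/-- If `x, x₁, x₂` form a triangle in a `C₄`-free graph and `y ∉ {x₁, x₂}` is a
neighbor of `x`, then `y` and `x₁` lie in different connected components of the
punctured 2-ball of `x`. -/
theorem stmt_3 (G : SimpleGraph V) (hC4 : C4Free G) (x x1 x2 y : V)
    (h1 : G.Adj x x1) (h2 : G.Adj x x2) (h12 : G.Adj x1 x2)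
    (hy : G.Adj x y) (hy1 : y ≠ x1) (hy2 : y ≠ x2) :
    ¬ (pBall G x).Reachable y x1 := by
  intro h
  have hx1 : x1 ∈ triangleWing G x x1 x2 := Or.inl rfl
  rcases h.symm.mem_of_adj_closed (hC4.triangleWing_adj_closed h1 h2 h12) hx1
    with rfl | rfl | ⟨hd, -⟩
  · exact hy1 rfl
  · exact hy2 rfl
  · simp [dist_eq_one_iff_adj.mpr hy] at hd
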